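/- Let (C_k)_{k≥0} be a sequence of Laurent polynomials with integer coefficients such that there exist positive constants A, B, D with ℓ¹-norm ‖C_k‖₁ ≤ e^{A k + B log k} and support of C_k contained in [−D k², D k²] for all k ≥ 1. Define f_n(α) = ∑_{k=0}^{n} K(n,k,α) · C_k(e^{α/n}) for integers n ≥ 1 and α ∈ ℂ. Then there exist an open neighborhood U of 0 in ℂ and a positive real number M such that |f_n(α)| < M for all α ∈ U and all n ≥ 1. -/

import Mathlib

/-- The evaluation of an integer Laurent polynomial (a finitely supported function `ℤ → ℤ`)
at a complex number `q`: `∑_j a_j q^j`. -/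
noncomputable def laurentEval (c : ℤ →₀ ℤ) (q : ℂ) : ℂ :=
  ∑ j ∈ c.support, (c j : ℂ) * q ^ j

/-- The ℓ¹-norm of an integer Laurent polynomial: `∑_j |a_j|`. -/
noncomputable def laurentL1 (c : ℤ →₀ ℤ) : ℝ :=
  ∑ j ∈ c.support, |(c j : ℝ)|

/-- The evaluation of the cyclotomic kernel `C_{n,k}` at `q = e^{α/n}`:
`K(n,k,α) = ∏_{j=1}^{k} ((e^{α/2} − e^{−α/2})² − (e^{jα/(2n)} − e^{−jα/(2n)})²)`. -/
noncomputable def cycKer (n k : ℕ) (α : ℂ) : ℂ :=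
  ∏ j ∈ Finset.Icc 1 k,
    ((Complex.exp (α / 2) - Complex.exp (-α / 2)) ^ 2
      - (Complex.exp ((j : ℂ) * α / (2 * n)) - Complex.exp (-((j : ℂ) * α / (2 * n)))) ^ 2)

/-!
Near `α = 0` every factor of `K(n,k,α)` is `O(|α|²)` uniformly in `1 ≤ k ≤ n`, because
`|jα/(2n)| ≤ |α|/2`; so `|K(n,k,α)| ≤ (8|α|²)^k`. On the other hand `|q^j| ≤ e^{|j||α|/n}` with
`|j| ≤ Dk²` and `k ≤ n` gives `|C_k(e^{α/n})| ≤ ‖C_k‖₁ e^{Dk} ≤ e^{(A+B+D)k}`. Hence the `k`-th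
term of `f_n(α)` is at most `(8|α|² e^{A+B+D})^k ≤ 2^{-k}` once `|α|` is small, and `f_n(α)` is
dominated by a geometric series independent of `n`.
-/

open Complex Finset

lemma norm_exp_sub_exp_neg_le {z : ℂ} (hz : ‖z‖ ≤ 1) : ‖exp z - exp (-z)‖ ≤ 4 * ‖z‖ := by
  have hpos := norm_exp_sub_one_le hz
  have hneg := norm_exp_sub_one_le (x := -z) (by rwa [norm_neg])
  rw [norm_neg] at hneg
  calc ‖exp z - exp (-z)‖ = ‖(exp z - 1) - (exp (-z) - 1)‖ := by ring_nf
    _ ≤ ‖exp z - 1‖ + ‖exp (-z) - 1‖ := norm_sub_le _ _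
    _ ≤ 4 * ‖z‖ := by linarith

@[simp]
lemma cycKer_zero (n : ℕ) (α : ℂ) : cycKer n 0 α = 1 := by
  simp [cycKer]

lemma norm_cycKer_le {n k : ℕ} (hk : k ≤ n) {α : ℂ} (hα : ‖α‖ ≤ 1) :
    ‖cycKer n k α‖ ≤ (8 * ‖α‖ ^ 2) ^ k := by
  have hsinh {z : ℂ} (hz : ‖z‖ ≤ ‖α‖ / 2) : ‖exp z - exp (-z)‖ ^ 2 ≤ (2 * ‖α‖) ^ 2 := by
    have := norm_exp_sub_exp_neg_le (hz.trans (by linarith))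
    exact pow_le_pow_left₀ (norm_nonneg _) (by linarith) 2
  have hfactor : ∀ j ∈ Icc 1 k,
      ‖(exp (α / 2) - exp (-α / 2)) ^ 2
        - (exp ((j : ℂ) * α / (2 * n)) - exp (-((j : ℂ) * α / (2 * n)))) ^ 2‖
      ≤ 8 * ‖α‖ ^ 2 := by
    intro j hj
    have hjn : (j : ℝ) ≤ n := by exact_mod_cast (mem_Icc.1 hj).2.trans hk
    have hj₁ : (1 : ℝ) ≤ j := by exact_mod_cast (mem_Icc.1 hj).1
    have hn : (0 : ℝ) < n := by linarith
    have hhalf : ‖α / 2‖ ≤ ‖α‖ / 2 := by simp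
    have hjα : ‖(j : ℂ) * α / (2 * n)‖ ≤ ‖α‖ / 2 := by
      rw [norm_div, norm_mul, norm_mul, Complex.norm_natCast, Complex.norm_natCast,
        Complex.norm_ofNat, div_le_div_iff₀ (by positivity) two_pos]
      nlinarith [norm_nonneg α]
    calc _ ≤ ‖exp (α / 2) - exp (-(α / 2))‖ ^ 2
          + ‖exp ((j : ℂ) * α / (2 * n)) - exp (-((j : ℂ) * α / (2 * n)))‖ ^ 2 := by
          rw [neg_div, ← norm_pow, ← norm_pow]; exact norm_sub_le _ _
      _ ≤ (2 * ‖α‖) ^ 2 + (2 * ‖α‖) ^ 2 := add_le_add (hsinh hhalf) (hsinh hjα)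
      _ = 8 * ‖α‖ ^ 2 := by ring
  calc ‖cycKer n k α‖ ≤ ∏ _j ∈ Icc 1 k, 8 * ‖α‖ ^ 2 := by
        rw [cycKer, norm_prod]; exact prod_le_prod (fun _ _ ↦ norm_nonneg _) hfactor
    _ = (8 * ‖α‖ ^ 2) ^ k := by rw [prod_const, Nat.card_Icc, Nat.add_sub_cancel]

lemma norm_laurentEval_le (c : ℤ →₀ ℤ) (q : ℂ) {R : ℝ} (hR : ∀ j ∈ c.support, ‖q ^ j‖ ≤ R) :
    ‖laurentEval c q‖ ≤ laurentL1 c * R := by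
  rw [laurentEval, laurentL1, sum_mul]
  refine (norm_sum_le _ _).trans (sum_le_sum fun j hj ↦ ?_)
  rw [norm_mul, norm_intCast]
  exact mul_le_mul_of_nonneg_left (hR j hj) (abs_nonneg _)

lemma norm_exp_zpow_le (w : ℂ) (j : ℤ) : ‖exp w ^ j‖ ≤ Real.exp (|(j : ℝ)| * ‖w‖) := by
  rw [← exp_int_mul, norm_exp, Real.exp_le_exp]
  calc ((j : ℂ) * w).re ≤ ‖(j : ℂ) * w‖ := re_le_norm _
    _ = |(j : ℝ)| * ‖w‖ := by rw [norm_mul, norm_intCast]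

lemma norm_laurentEval_exp_le (c : ℤ →₀ ℤ) (w : ℂ) {R : ℝ}
    (hR : ∀ j ∈ c.support, |(j : ℝ)| * ‖w‖ ≤ R) :
    ‖laurentEval c (exp w)‖ ≤ laurentL1 c * Real.exp R :=
  norm_laurentEval_le c _ fun j hj ↦ (norm_exp_zpow_le w j).trans (Real.exp_le_exp.2 (hR j hj))

lemma norm_laurentEval_exp_le_of_norm_le_one (c : ℤ →₀ ℤ) {w : ℂ} (hw : ‖w‖ ≤ 1) :
    ‖laurentEval c (exp w)‖ ≤ laurentL1 c * Real.exp (∑ j ∈ c.support, |(j : ℝ)|) :=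
  norm_laurentEval_exp_le c w fun _ hj ↦ (mul_le_of_le_one_right (abs_nonneg _) hw).trans
    (single_le_sum (f := fun i : ℤ ↦ |(i : ℝ)|) (fun _ _ ↦ abs_nonneg _) hj)

lemma exp_mul_add_mul_log_le {A B x : ℝ} (hB : 0 ≤ B) (hx : 0 ≤ x) :
    Real.exp (A * x + B * Real.log x) ≤ Real.exp ((A + B) * x) :=
  Real.exp_le_exp.2 (by nlinarith [Real.log_le_self hx])

lemma norm_cycKer_mul_laurentEval_le {n k : ℕ} (hk : 1 ≤ k) (hkn : k ≤ n) {α : ℂ} (hα : ‖α‖ ≤ 1)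
    (c : ℤ →₀ ℤ) {a D : ℝ} (hL1 : laurentL1 c ≤ Real.exp (a * k))
    (hsupp : ∀ j ∈ c.support, |(j : ℝ)| ≤ D * (k : ℝ) ^ 2) :
    ‖cycKer n k α * laurentEval c (exp (α / n))‖ ≤ (8 * ‖α‖ ^ 2 * Real.exp (a + D)) ^ k := by
  have hk₀ : (0 : ℝ) < k := by exact_mod_cast hk
  have hkn' : (k : ℝ) ≤ n := by exact_mod_cast hkn
  have heval : ‖laurentEval c (exp (α / n))‖ ≤ Real.exp (a * k) * Real.exp (D * k) := by
    refine (norm_laurentEval_exp_le c _ fun j hj ↦ ?_).trans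
      (mul_le_mul_of_nonneg_right hL1 (Real.exp_pos _).le)
    calc |(j : ℝ)| * ‖α / n‖ ≤ |(j : ℝ)| / k := by
          rw [norm_div, Complex.norm_natCast, ← mul_div_assoc]
          gcongr
          exact mul_le_of_le_one_right (abs_nonneg _) hα
      _ ≤ D * k ^ 2 / k := by gcongr; exact hsupp j hj
      _ = D * k := by field_simp
  calc ‖cycKer n k α * laurentEval c (exp (α / n))‖
      ≤ (8 * ‖α‖ ^ 2) ^ k * (Real.exp (a * k) * Real.exp (D * k)) := by
        rw [norm_mul]; exact mul_le_mul (norm_cycKer_le hkn hα) heval (norm_nonneg _)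
          (by positivity)
    _ = (8 * ‖α‖ ^ 2 * Real.exp (a + D)) ^ k := by
        rw [← Real.exp_add, ← add_mul, mul_comm _ (k : ℝ), Real.exp_nat_mul, ← mul_pow]

lemma norm_sum_range_le_of_le_geometric {E : Type*} [SeminormedAddCommGroup E] (g : ℕ → E)
    {c : ℝ} (n : ℕ) (hg : ∀ k ≤ n, ‖g k‖ ≤ c * (1 / 2) ^ k) :
    ‖∑ k ∈ range (n + 1), g k‖ ≤ 2 * c := by
  have hc : 0 ≤ c := by simpa using (norm_nonneg _).trans (hg 0 n.zero_le)
  calc ‖∑ k ∈ range (n + 1), g k‖ ≤ ∑ k ∈ range (n + 1), c * (1 / 2 : ℝ) ^ k :=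
        norm_sum_le_of_le _ fun k hk ↦ hg k (Nat.lt_succ_iff.1 (mem_range.1 hk))
    _ ≤ c * 2 := by rw [← mul_sum]; exact mul_le_mul_of_nonneg_left (sum_geometric_two_le _) hc
    _ = 2 * c := mul_comm _ _

theorem colored_jones_uniform_bound_general (C : ℕ → (ℤ →₀ ℤ)) (A B D : ℝ)
    (hB : 0 < B)
    (hnorm : ∀ k : ℕ, 1 ≤ k → laurentL1 (C k) ≤ Real.exp (A * k + B * Real.log k))
    (hsupp : ∀ k : ℕ, 1 ≤ k → ∀ j ∈ (C k).support, |(j : ℝ)| ≤ D * (k : ℝ) ^ 2)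
    (f : ℕ → ℂ → ℂ)
    (hf : ∀ n : ℕ, ∀ α : ℂ,
      f n α = ∑ k ∈ Finset.range (n + 1), cycKer n k α * laurentEval (C k) (Complex.exp (α / n))) :
    ∃ U : Set ℂ, IsOpen U ∧ 0 ∈ U ∧ ∃ M : ℝ, 0 < M ∧
      ∀ α ∈ U, ∀ n : ℕ, 1 ≤ n → ‖f n α‖ < M := by
  set E := Real.exp (A + B + D)
  set c := laurentL1 (C 0) * Real.exp (∑ j ∈ (C 0).support, |(j : ℝ)|) + 1
  have hc : 1 ≤ c := by
    have : 0 ≤ laurentL1 (C 0) := sum_nonneg fun _ _ ↦ abs_nonneg _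
    simp only [c]; nlinarith [Real.exp_pos (∑ j ∈ (C 0).support, |(j : ℝ)|)]
  refine ⟨Metric.ball 0 (min 1 (1 / (16 * E))), Metric.isOpen_ball,
    Metric.mem_ball_self (lt_min one_pos (by positivity)), 3 * c, by linarith, ?_⟩
  intro α hα n hn
  rw [mem_ball_zero_iff, lt_min_iff, lt_div_iff₀ (by positivity)] at hα
  have hsmall : 8 * ‖α‖ ^ 2 * E ≤ 1 / 2 := by nlinarith [norm_nonneg α]
  rw [hf]
  refine (norm_sum_range_le_of_le_geometric (c := c) _ n fun k hk ↦ ?_).trans_lt (by linarith)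
  rcases k with _ | k
  · have hαn : ‖α / n‖ ≤ 1 := by
      rw [norm_div, Complex.norm_natCast]
      exact div_le_one_of_le₀ (hα.1.le.trans (by exact_mod_cast hn)) (Nat.cast_nonneg n)
    rw [cycKer_zero, one_mul, pow_zero, mul_one]
    linarith [norm_laurentEval_exp_le_of_norm_le_one (C 0) hαn]
  · have hL1 := (hnorm _ k.succ_pos).trans (exp_mul_add_mul_log_le hB.le (Nat.cast_nonneg _))
    calc _ ≤ (8 * ‖α‖ ^ 2 * E) ^ (k + 1) :=
          norm_cycKer_mul_laurentEval_le k.succ_pos hk hα.1.le (C (k + 1)) hL1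
            (hsupp _ k.succ_pos)
      _ ≤ (1 / 2) ^ (k + 1) := pow_le_pow_left₀ (by positivity) hsmall _
      _ ≤ c * (1 / 2) ^ (k + 1) := le_mul_of_one_le_left (by positivity) hc

/-- If `(C_k)` is a sequence of integer Laurent polynomials with
`‖C_k‖₁ ≤ e^{A k + B log k}` and support contained in `[−D k², D k²]` for all `k ≥ 1`,
and `f_n(α) = ∑_{k=0}^{n} K(n,k,α) · C_k(e^{α/n})`, then there exist an open neighborhood
`U` of `0` in `ℂ` and `M > 0` with `|f_n(α)| < M` for all `α ∈ U` and `n ≥ 1`. -/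
theorem colored_jones_uniform_bound (C : ℕ → (ℤ →₀ ℤ)) (A B D : ℝ)
    (hA : 0 < A) (hB : 0 < B) (hD : 0 < D)
    (hnorm : ∀ k : ℕ, 1 ≤ k → laurentL1 (C k) ≤ Real.exp (A * k + B * Real.log k))
    (hsupp : ∀ k : ℕ, 1 ≤ k → ∀ j ∈ (C k).support, |(j : ℝ)| ≤ D * (k : ℝ) ^ 2)
    (f : ℕ → ℂ → ℂ)
    (hf : ∀ n : ℕ, ∀ α : ℂ,
      f n α = ∑ k ∈ Finset.range (n + 1), cycKer n k α * laurentEval (C k) (Complex.exp (α / n))) :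
    ∃ U : Set ℂ, IsOpen U ∧ 0 ∈ U ∧ ∃ M : ℝ, 0 < M ∧
      ∀ α ∈ U, ∀ n : ℕ, 1 ≤ n → ‖f n α‖ < M :=
  colored_jones_uniform_bound_general C A B D hB hnorm hsupp f hf
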